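/- Suppose G is a finite connected planar 4-valent multigraph embedded in the sphere whose face-degree counts f i satisfy ∑_i (4 - i) * f i = 8 and f 2 = 0. If every face of degree 3 is adjacent (shares an edge) only with faces of degree at least 6, then assigning charge 4 - i to each i-sided face and discharging 1/3 from each triangle across each of its three edges leaves every face with charge ≤ 0, contradicting that total charge is 8. Hence there exists a triangle adjacent to a face of degree 3, 4, or 5. -/

import Mathlib

/-! Give each face `x` the charge `4 - deg x`, so the total is `8` by Euler's formula, and let
each triangle send `1/3` across each of its edges. If every triangle borders only faces with at
least six sides, a triangle ends with charge `0`, a quadrilateral or pentagon with `4 - deg x ≤ 0`,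
and a face with `d ≥ 6` sides with at most `4 - d + d/3 ≤ 0`; the total can then not be `8`. -/

/-- A connected lune-free link diagram, abstracted via its faces, their degrees,
and the number of edges shared by pairs of faces. -/
structure LuneFreeDiagram where
  Face : Type
  [fin : Fintype Face]
  /-- number of sides of a face -/
  deg : Face → ℕ
  /-- number of edges shared by two faces -/
  shared : Face → Face → ℕ
  shared_symm : ∀ x y, shared x y = shared y x
  /-- every edge of a face borders some face -/
  edges_count : ∀ x, ∑ y, shared x y = deg x
  /-- lune-free: every face has at least 3 sides -/
  lune_free : ∀ x, 3 ≤ deg x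
  /-- Euler's formula for 4-valent plane graphs: total charge is 8 -/
  euler : ∑ x, ((4 : ℤ) - deg x) = 8

attribute [instance] LuneFreeDiagram.fin

namespace LuneFreeDiagram

variable (D : LuneFreeDiagram)

def triangles : Finset D.Face := {x | D.deg x = 3}

def triangleEdges (x : D.Face) : ℕ := ∑ y ∈ D.triangles, D.shared y x

/-- Three times the charge of `x` after discharging, to stay in `ℤ`. -/
def dischargedCharge (x : D.Face) : ℤ :=
  3 * (4 - D.deg x) - (if D.deg x = 3 then 3 else 0) + D.triangleEdges x

theorem sum_triangleEdges : ∑ x, D.triangleEdges x = 3 * D.triangles.card := by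
  unfold triangleEdges
  rw [Finset.sum_comm, Finset.card_eq_sum_ones, Finset.mul_sum]
  refine Finset.sum_congr rfl fun y hy => ?_
  rw [D.edges_count y, (Finset.mem_filter.mp hy).2, mul_one]

theorem sum_dischargedCharge : ∑ x, D.dischargedCharge x = 24 := by
  have hshared : ∑ x, (D.triangleEdges x : ℤ) = 3 * D.triangles.card := by
    exact_mod_cast D.sum_triangleEdges
  have hout : ∑ x, (if D.deg x = 3 then (3 : ℤ) else 0) = 3 * D.triangles.card := by
    rw [← Finset.sum_filter, Finset.sum_const, nsmul_eq_mul, mul_comm]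
    rfl
  simp only [dischargedCharge, Finset.sum_add_distrib, Finset.sum_sub_distrib, ← Finset.mul_sum,
    D.euler, hshared, hout]
  ring

theorem triangleEdges_le_deg (x : D.Face) : D.triangleEdges x ≤ D.deg x :=
  calc D.triangleEdges x ≤ ∑ y, D.shared y x :=
        Finset.sum_le_sum_of_subset (Finset.subset_univ _)
    _ = D.deg x := by simp only [D.shared_symm _ x, D.edges_count]

theorem triangleEdges_eq_zero {x : D.Face} (hx : ∀ y, D.deg y = 3 → D.shared y x = 0) :
    D.triangleEdges x = 0 :=
  Finset.sum_eq_zero fun y hy => hx y (Finset.mem_filter.mp hy).2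

theorem dischargedCharge_nonpos {x : D.Face}
    (hx : ∀ y, D.deg y = 3 → 0 < D.shared y x → 6 ≤ D.deg x) : D.dischargedCharge x ≤ 0 := by
  have h3 := D.lune_free x
  have hle := D.triangleEdges_le_deg x
  unfold dischargedCharge
  by_cases h6 : 6 ≤ D.deg x
  · split_ifs <;> omega
  · have h0 := D.triangleEdges_eq_zero (x := x) fun y hy => by have := hx y hy; omega
    split_ifs <;> omega

end LuneFreeDiagram

/-- In a connected lune-free diagram there is a triangle adjacent (sharing an edge)
to a face of degree 3, 4, or 5: otherwise discharging 1/3 from each triangle across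
each of its edges would leave every face with charge ≤ 0, contradicting total charge 8. -/
theorem exists_triangle_adjacent_small_face (D : LuneFreeDiagram) :
    ∃ x y : D.Face, D.deg x = 3 ∧ 0 < D.shared x y ∧
      D.deg y ∈ ({3, 4, 5} : Set ℕ) := by
  by_contra hcon
  push Not at hcon
  have hnonpos : ∀ x, D.dischargedCharge x ≤ 0 := fun x =>
    D.dischargedCharge_nonpos fun y hy hpos => by
      have hsmall := hcon y x hy hpos
      simp only [Set.mem_insert_iff, Set.mem_singleton_iff] at hsmall
      have hx3 := D.lune_free x
      omega
  have htotal : ∑ x, D.dischargedCharge x ≤ 0 := Finset.sum_nonpos fun x _ => hnonpos x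
  rw [D.sum_dischargedCharge] at htotal
  omega
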